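/- arXiv:2110.01858 — 2 statements merged into one kernel-verified Lean document; each statement's English description precedes it below -/
import Mathlib

section
/- Let E be a real inner product space, and let f : E → ℝ be differentiable with gradient ∇f that is L-Lipschitz for some L > 0, and suppose f is bounded below by f*, i.e., f* ≤ f(x) for all x. Let the gradient descent iterates be defined by x⁽ᵏ⁺¹⁾ = x⁽ᵏ⁾ − (1/L)·∇f(x⁽ᵏ⁾) starting from an arbitrary x⁽⁰⁾. Then for every t ∈ ℕ: min_{0 ≤ k ≤ t} ‖∇f(x⁽ᵏ⁾)‖² ≤ 2L·(f(x⁽⁰⁾) − f*)/(t+1). -/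
/-!
With an `L`-Lipschitz gradient, `f` lies below the quadratic
`f x + ⟪∇f x, v⟫ + L/2 ‖v‖²` along every direction `v`. Taking `v = -∇f x / L` shows that one
gradient step lowers `f` by at least `‖∇f x‖² / (2L)`. Summing over the first `t + 1` steps,
the decreases telescope to at most `f x₀ - f*`, so the smallest of the `t + 1` squared
gradient norms is at most their average `2L (f x₀ - f*) / (t + 1)`.
-/

open RealInnerProductSpace Finset Set

section Descent

variable {E : Type*} [NormedAddCommGroup E] [InnerProductSpace ℝ E] [CompleteSpace E]
  {f : E → ℝ} {g : E → E} {L : ℝ}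

theorem HasGradientAt.hasDerivAt_comp_add_smul {g' x v : E} {t : ℝ}
    (h : HasGradientAt f g' (x + t • v)) :
    HasDerivAt (fun s : ℝ => f (x + s • v)) ⟪g', v⟫ t := by
  have hline : HasDerivAt (fun s : ℝ => x + s • v) v t := by
    simpa using ((hasDerivAt_id t).smul_const v).const_add x
  exact h.hasFDerivAt.comp_hasDerivAt t hline

theorem le_add_inner_add_of_lipschitz_gradient (hf : ∀ z, HasGradientAt f (g z) z)
    (hg : ∀ z w, ‖g z - g w‖ ≤ L * ‖z - w‖) (x v : E) :
    f (x + v) ≤ f x + ⟪g x, v⟫ + L / 2 * ‖v‖ ^ 2 := by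
  set φ : ℝ → ℝ := fun t => f (x + t • v) - t * ⟪g x, v⟫ - L / 2 * t ^ 2 * ‖v‖ ^ 2
  have hφ : ∀ t, HasDerivAt φ (⟪g (x + t • v) - g x, v⟫ - L * t * ‖v‖ ^ 2) t := by
    intro t
    have := (((hf (x + t • v)).hasDerivAt_comp_add_smul).sub
      ((hasDerivAt_id t).mul_const ⟪g x, v⟫)).sub
        (((hasDerivAt_pow 2 t).const_mul (L / 2)).mul_const (‖v‖ ^ 2))
    refine (this : HasDerivAt φ _ t).congr_deriv ?_
    simp only [inner_sub_left, one_mul, Nat.cast_ofNat, Nat.add_one_sub_one, pow_one]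
    ring
  have hφ_nonpos : ∀ t, 0 < t → ⟪g (x + t • v) - g x, v⟫ - L * t * ‖v‖ ^ 2 ≤ 0 := by
    intro t ht
    rw [sub_nonpos]
    calc ⟪g (x + t • v) - g x, v⟫ ≤ ‖g (x + t • v) - g x‖ * ‖v‖ := real_inner_le_norm _ _
      _ ≤ L * ‖t • v‖ * ‖v‖ := by gcongr; simpa using hg (x + t • v) x
      _ = L * t * ‖v‖ ^ 2 := by rw [norm_smul, Real.norm_of_nonneg ht.le]; ring
  have hanti : AntitoneOn φ (Icc 0 1) :=
    antitoneOn_of_hasDerivWithinAt_nonpos (convex_Icc 0 1)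
      (fun t _ => (hφ t).continuousAt.continuousWithinAt) (fun t _ => (hφ t).hasDerivWithinAt)
      (fun t ht => hφ_nonpos t (by rw [interior_Icc] at ht; exact ht.1))
  have h10 := hanti (left_mem_Icc.2 zero_le_one) (right_mem_Icc.2 zero_le_one) zero_le_one
  simp only [φ, zero_smul, add_zero, one_smul, zero_mul, sub_zero, one_mul, one_pow] at h10
  linarith

theorem sq_norm_le_of_gradient_step (hL : 0 < L) (hf : ∀ z, HasGradientAt f (g z) z)
    (hg : ∀ z w, ‖g z - g w‖ ≤ L * ‖z - w‖) (x : E) :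
    ‖g x‖ ^ 2 ≤ 2 * L * (f x - f (x - (1 / L) • g x)) := by
  have h := le_add_inner_add_of_lipschitz_gradient hf hg x (-((1 / L) • g x))
  rw [← sub_eq_add_neg, inner_neg_right, real_inner_smul_right, real_inner_self_eq_norm_sq,
    norm_neg, norm_smul, Real.norm_of_nonneg (by positivity)] at h
  have hquad : -(1 / L * ‖g x‖ ^ 2) + L / 2 * (1 / L * ‖g x‖) ^ 2 = -(‖g x‖ ^ 2 / (2 * L)) := by
    field_simp
    ring
  rw [add_assoc, hquad, ← sub_eq_add_neg, le_sub_comm, div_le_iff₀ (by positivity)] at h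
  linarith

end Descent

theorem exists_le_div_of_sum_range_le {K : Type*} [Field K] [LinearOrder K]
    [IsStrictOrderedRing K] {d : ℕ → K} {C : K} {t : ℕ}
    (h : ∑ k ∈ range (t + 1), d k ≤ C) : ∃ k ≤ t, d k ≤ C / (t + 1) := by
  have hsum : ∑ k ∈ range (t + 1), d k ≤ ∑ _k ∈ range (t + 1), C / (t + 1) := by
    rwa [sum_const, card_range, nsmul_eq_mul, Nat.cast_succ, mul_div_cancel₀ _ (by positivity)]
  obtain ⟨k, hk, hle⟩ := exists_le_of_sum_le nonempty_range_add_one hsum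
  exact ⟨k, Nat.lt_succ_iff.mp (mem_range.mp hk), hle⟩

/-- Convergence rate of gradient descent for a (possibly nonconvex) function bounded
below: after `t` iterations, the smallest squared gradient norm among the iterates is
at most `2L (f x₀ - f*) / (t+1)`. -/
theorem gradient_descent_min_grad_norm_bound {E : Type*} [NormedAddCommGroup E]
    [InnerProductSpace ℝ E] [CompleteSpace E] (f : E → ℝ) (g : E → E)
    (L : ℝ) (hL : 0 < L)
    (hdiff : ∀ z, HasGradientAt f (g z) z)
    (hlip : ∀ z w, ‖g z - g w‖ ≤ L * ‖z - w‖)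
    (fstar : ℝ) (hbound : ∀ z, fstar ≤ f z)
    (x : ℕ → E) (hiter : ∀ k, x (k + 1) = x k - (1 / L) • g (x k)) :
    ∀ t : ℕ, ∃ k ≤ t, ‖g (x k)‖ ^ 2 ≤ 2 * L * (f (x 0) - fstar) / ((t : ℝ) + 1) := by
  intro t
  have hstep : ∀ k, ‖g (x k)‖ ^ 2 ≤ 2 * L * f (x k) - 2 * L * f (x (k + 1)) := fun k => by
    rw [hiter, ← mul_sub]
    exact sq_norm_le_of_gradient_step hL hdiff hlip (x k)
  apply exists_le_div_of_sum_range_le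
  calc ∑ k ∈ range (t + 1), ‖g (x k)‖ ^ 2
      ≤ 2 * L * f (x 0) - 2 * L * f (x (t + 1)) :=
        (sum_le_sum fun k _ => hstep k).trans_eq (sum_range_sub' (fun k => 2 * L * f (x k)) _)
    _ ≤ 2 * L * (f (x 0) - fstar) := by
        rw [mul_sub]
        gcongr
        exact hbound _
end

section
/- Let E be a real inner product space, and let f : E → ℝ be differentiable with gradient ∇f that is L-Lipschitz, and μ-strongly convex in the sense that f(y) ≥ f(x) + ⟨∇f(x), y − x⟩ + (μ/2)‖y − x‖² for all x, y, where 0 < μ ≤ L. Let x* be the global minimizer of f and let the gradient descent iterates be x⁽ᵏ⁺¹⁾ = x⁽ᵏ⁾ − (1/L)·∇f(x⁽ᵏ⁾) starting from an arbitrary x⁽⁰⁾. Then for every t ∈ ℕ: f(x⁽ᵗ⁾) − f(x*) ≤ (1 − μ/L)ᵗ · (f(x⁽⁰⁾) − f(x*)). -/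
/-!
Strong convexity yields the Polyak–Łojasiewicz inequality `2μ (f p - f q) ≤ ‖∇f p‖²` (minimise its
quadratic lower bound in the second argument), and the `L`-Lipschitz gradient yields the descent
lemma, by which a step of length `1/L` decreases `f` by at least `‖∇f p‖² / (2L)`. Combined, every
step multiplies the gap `f p - f q` by at most `1 - μ/L`.
-/

open RealInnerProductSpace

section

variable {E : Type*} [NormedAddCommGroup E] [InnerProductSpace ℝ E]
  {f : E → ℝ} {g : E → E} {L μ : ℝ}

theorem hasDerivAt_comp_add_smul [CompleteSpace E] (hf : ∀ z, HasGradientAt f (g z) z)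
    (p d : E) (t : ℝ) :
    HasDerivAt (fun s : ℝ => f (p + s • d)) ⟪g (p + t • d), d⟫ t := by
  have hline : HasDerivAt (fun s : ℝ => p + s • d) d t := by
    simpa using ((hasDerivAt_id t).smul_const d).const_add p
  have h := (hf (p + t • d)).hasFDerivAt.comp_hasDerivAt t hline
  simp only [InnerProductSpace.toDual_apply_apply] at h
  exact h

theorem inner_add_smul_sub_inner_le (hlip : ∀ z w, ‖g z - g w‖ ≤ L * ‖z - w‖) (p d : E)
    {t : ℝ} (ht : 0 ≤ t) : ⟪g (p + t • d), d⟫ - ⟪g p, d⟫ ≤ L * t * ‖d‖ ^ 2 :=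
  calc ⟪g (p + t • d), d⟫ - ⟪g p, d⟫ = ⟪g (p + t • d) - g p, d⟫ := (inner_sub_left ..).symm
    _ ≤ ‖g (p + t • d) - g p‖ * ‖d‖ := real_inner_le_norm _ _
    _ ≤ L * ‖t • d‖ * ‖d‖ := by gcongr; simpa using hlip (p + t • d) p
    _ = L * t * ‖d‖ ^ 2 := by rw [norm_smul, Real.norm_of_nonneg ht]; ring

theorem le_add_inner_add_sq_of_lipschitz_gradient [CompleteSpace E]
    (hf : ∀ z, HasGradientAt f (g z) z)
    (hlip : ∀ z w, ‖g z - g w‖ ≤ L * ‖z - w‖) (p d : E) :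
    f (p + d) ≤ f p + ⟪g p, d⟫ + L / 2 * ‖d‖ ^ 2 := by
  set ψ : ℝ → ℝ := fun t => f (p + t • d) - t * ⟪g p, d⟫ - L / 2 * t ^ 2 * ‖d‖ ^ 2
  have hψ : ∀ t, HasDerivAt ψ (⟪g (p + t • d), d⟫ - ⟪g p, d⟫ - L * t * ‖d‖ ^ 2) t := by
    intro t
    refine (((hasDerivAt_comp_add_smul hf p d t).sub ((hasDerivAt_id t).mul_const _)).sub
      (((hasDerivAt_pow 2 t).const_mul (L / 2)).mul_const (‖d‖ ^ 2))).congr_deriv ?_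
    simp only [Nat.cast_ofNat, Nat.add_one_sub_one, pow_one]
    ring
  have hanti : AntitoneOn ψ (Set.Icc 0 1) :=
    antitoneOn_of_hasDerivWithinAt_nonpos (convex_Icc 0 1)
      (fun t _ => (hψ t).continuousAt.continuousWithinAt) (fun t _ => (hψ t).hasDerivWithinAt)
      fun t ht => by
        rw [interior_Icc] at ht
        linarith [inner_add_smul_sub_inner_le hlip p d ht.1.le]
  have h := hanti (Set.left_mem_Icc.2 zero_le_one) (Set.right_mem_Icc.2 zero_le_one) zero_le_one
  simp only [ψ, zero_smul, add_zero, one_smul] at h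
  linarith

theorem two_mul_sub_le_norm_sq_of_strongly_convex (hμ : 0 < μ)
    (hsc : ∀ z w, f z + ⟪g z, w - z⟫ + μ / 2 * ‖w - z‖ ^ 2 ≤ f w) (p q : E) :
    2 * μ * (f p - f q) ≤ ‖g p‖ ^ 2 := by
  have hsq : 0 ≤ ‖μ • (q - p) + g p‖ ^ 2 := sq_nonneg _
  rw [norm_add_sq_real, norm_smul, real_inner_smul_left, Real.norm_of_nonneg hμ.le,
    real_inner_comm] at hsq
  nlinarith [hsc p q]

theorem le_sub_norm_sq_of_gradient_step [CompleteSpace E] (hL : 0 < L)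
    (hf : ∀ z, HasGradientAt f (g z) z)
    (hlip : ∀ z w, ‖g z - g w‖ ≤ L * ‖z - w‖) (p : E) :
    f (p - (1 / L) • g p) ≤ f p - ‖g p‖ ^ 2 / (2 * L) := by
  have h := le_add_inner_add_sq_of_lipschitz_gradient hf hlip p (-((1 / L) • g p))
  rw [← sub_eq_add_neg, inner_neg_right, real_inner_smul_right, real_inner_self_eq_norm_sq,
    norm_neg, norm_smul, Real.norm_of_nonneg (by positivity)] at h
  convert h using 1
  field_simp
  ring

theorem gradient_step_sub_le [CompleteSpace E] (hμ : 0 < μ) (hμL : μ ≤ L)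
    (hf : ∀ z, HasGradientAt f (g z) z)
    (hlip : ∀ z w, ‖g z - g w‖ ≤ L * ‖z - w‖)
    (hsc : ∀ z w, f z + ⟪g z, w - z⟫ + μ / 2 * ‖w - z‖ ^ 2 ≤ f w) (p q : E) :
    f (p - (1 / L) • g p) - f q ≤ (1 - μ / L) * (f p - f q) := by
  have hL : 0 < L := hμ.trans_le hμL
  have hdecrease := le_sub_norm_sq_of_gradient_step hL hf hlip p
  have hgap : μ / L * (f p - f q) ≤ ‖g p‖ ^ 2 / (2 * L) :=
    calc μ / L * (f p - f q) = 2 * μ * (f p - f q) / (2 * L) := by field_simp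
      _ ≤ ‖g p‖ ^ 2 / (2 * L) := by
        gcongr; exact two_mul_sub_le_norm_sq_of_strongly_convex hμ hsc p q
  linarith

end

theorem gradient_descent_strongly_convex_rate_general {E : Type*} [NormedAddCommGroup E]
    [InnerProductSpace ℝ E] [CompleteSpace E] (f : E → ℝ) (g : E → E)
    (L μ : ℝ) (hμ : 0 < μ) (hμL : μ ≤ L)
    (hdiff : ∀ z, HasGradientAt f (g z) z)
    (hlip : ∀ z w, ‖g z - g w‖ ≤ L * ‖z - w‖)
    (hsc : ∀ z w, f z + ⟪g z, w - z⟫ + μ / 2 * ‖w - z‖ ^ 2 ≤ f w)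
    (xstar : E)
    (x : ℕ → E) (hiter : ∀ k, x (k + 1) = x k - (1 / L) • g (x k)) :
    ∀ t : ℕ, f (x t) - f xstar ≤ (1 - μ / L) ^ t * (f (x 0) - f xstar) := by
  have hrate : 0 ≤ 1 - μ / L := sub_nonneg.2 ((div_le_one (hμ.trans_le hμL)).2 hμL)
  intro t
  induction t with
  | zero => simp
  | succ n ih =>
    calc f (x (n + 1)) - f xstar ≤ (1 - μ / L) * (f (x n) - f xstar) := by
          rw [hiter]; exact gradient_step_sub_le hμ hμL hdiff hlip hsc _ _
      _ ≤ (1 - μ / L) * ((1 - μ / L) ^ n * (f (x 0) - f xstar)) := by gcongr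
      _ = (1 - μ / L) ^ (n + 1) * (f (x 0) - f xstar) := by ring

/-- Linear convergence rate of gradient descent for `μ`-strongly convex functions with
`L`-Lipschitz gradient: `f x⁽ᵗ⁾ - f x* ≤ (1 - μ/L)ᵗ (f x⁽⁰⁾ - f x*)`. -/
theorem gradient_descent_strongly_convex_rate {E : Type*} [NormedAddCommGroup E]
    [InnerProductSpace ℝ E] [CompleteSpace E] (f : E → ℝ) (g : E → E)
    (L μ : ℝ) (hμ : 0 < μ) (hμL : μ ≤ L)
    (hdiff : ∀ z, HasGradientAt f (g z) z)
    (hlip : ∀ z w, ‖g z - g w‖ ≤ L * ‖z - w‖)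
    (hsc : ∀ z w, f z + ⟪g z, w - z⟫ + μ / 2 * ‖w - z‖ ^ 2 ≤ f w)
    (xstar : E) (hmin : ∀ y, f xstar ≤ f y)
    (x : ℕ → E) (hiter : ∀ k, x (k + 1) = x k - (1 / L) • g (x k)) :
    ∀ t : ℕ, f (x t) - f xstar ≤ (1 - μ / L) ^ t * (f (x 0) - f xstar) :=
  gradient_descent_strongly_convex_rate_general f g L μ hμ hμL hdiff hlip hsc xstar x hiter
end
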